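/- arXiv:2104.05001 — 2 statements merged into one kernel-verified Lean document; each statement's English description precedes it below -/
import Mathlib

section
/- For every z, w in the open unit disc of ℂ with z ≠ w, writing H(z,w) = (h₁,h₂,h₃), one has the identity |h₁|² + |h₂|² − |h₃|² = 2/ρ(z,w)² − 1, where ρ(z,w) = |(z−w)/(1−conj(z)·w)| is the pseudohyperbolic distance between z and w. -/
/-- The map `H(z,w) = ((1−zw)/(z−w), i(1+zw)/(z−w), −i(z+w)/(z−w))`. -/
noncomputable def Hmap (z w : ℂ) : ℂ × ℂ × ℂ :=
  ((1 - z * w) / (z - w), Complex.I * (1 + z * w) / (z - w),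
    -Complex.I * (z + w) / (z - w))

/-- The pseudohyperbolic distance `ρ(z,w) = |(z−w)/(1−conj(z)·w)|`. -/
noncomputable def rho (z w : ℂ) : ℝ :=
  ‖(z - w) / (1 - (starRingEnd ℂ) z * w)‖

/-!
All three coordinates of `H(z,w)` share the denominator `z - w`, and the numerators satisfy the
polynomial identity `|1 - zw|² + |1 + zw|² - |z + w|² = 2|1 - z̄w|² - |z - w|²`; dividing by
`|z - w|²` gives `2 |1 - z̄w|² / |z - w|² - 1 = 2 / ρ² - 1`.
-/

open Complex ComplexConjugate

theorem norm_one_sub_mul_sq_add_norm_one_add_mul_sq_sub_norm_add_sq (z w : ℂ) :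
    ‖1 - z * w‖ ^ 2 + ‖1 + z * w‖ ^ 2 - ‖z + w‖ ^ 2 =
      2 * ‖1 - conj z * w‖ ^ 2 - ‖z - w‖ ^ 2 := by
  simp only [Complex.sq_norm, normSq_apply, mul_re, mul_im, sub_re, sub_im, add_re, add_im, one_re,
    one_im, conj_re, conj_im]
  ring

theorem two_div_rho_sq (z w : ℂ) :
    2 / rho z w ^ 2 = 2 * ‖1 - conj z * w‖ ^ 2 / ‖z - w‖ ^ 2 := by
  rw [rho, norm_div, div_pow, div_div_eq_mul_div]

theorem Hmap_norm_eq_general (z w : ℂ)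
    (hzw : z ≠ w) :
    ‖(Hmap z w).1‖ ^ 2 + ‖(Hmap z w).2.1‖ ^ 2 -
        ‖(Hmap z w).2.2‖ ^ 2 = 2 / rho z w ^ 2 - 1 := by
  have hd : ‖z - w‖ ^ 2 ≠ 0 := by simpa [sub_eq_zero] using hzw
  simp only [Hmap, norm_div, norm_mul, norm_neg, norm_I, one_mul, div_pow]
  rw [two_div_rho_sq, ← add_div, ← sub_div,
    norm_one_sub_mul_sq_add_norm_one_add_mul_sq_sub_norm_add_sq, sub_div, div_self hd]

/-- For `z ≠ w` in the unit disc, writing `H(z,w) = (h₁,h₂,h₃)`, one has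
`|h₁|² + |h₂|² − |h₃|² = 2/ρ(z,w)² − 1`. -/
theorem Hmap_norm_eq (z w : ℂ)
    (hz : ‖z‖ < 1) (hw : ‖w‖ < 1) (hzw : z ≠ w) :
    ‖(Hmap z w).1‖ ^ 2 + ‖(Hmap z w).2.1‖ ^ 2 -
        ‖(Hmap z w).2.2‖ ^ 2 = 2 / rho z w ^ 2 - 1 :=
  Hmap_norm_eq_general z w hzw
end

section
/- For every a ∈ (0,1), the map H carries the set F_a = {(z₁,z₂) ∈ D² : ρ(z₁,z₂) = a} onto the set η^{(2)}_α, where α = 8/a⁴ − 8/a² + 1; that is, H(F_a) = η^{(2)}_α. -/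
/-- The orbit `F_a = {(z₁,z₂) ∈ D² : ρ(z₁,z₂) = a}`. -/
def Fset (a : ℝ) : Set (ℂ × ℂ) :=
  {p | ‖p.1‖ < 1 ∧ ‖p.2‖ < 1 ∧ rho p.1 p.2 = a}

/-- The hypersurface `η^{(2)}_α`. -/
noncomputable def eta (α : ℝ) : Set (ℂ × ℂ × ℂ) :=
  {q | q.1 ^ 2 + q.2.1 ^ 2 - q.2.2 ^ 2 = 1 ∧
       0 < (q.2.1 * ((starRingEnd ℂ) q.1 + (starRingEnd ℂ) q.2.2)).im ∧
       ‖q.1‖ ^ 2 + ‖q.2.1‖ ^ 2 - ‖q.2.2‖ ^ 2 =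
         Real.sqrt ((α + 1) / 2)}

/-! For `z ≠ w` and `q = H(z,w)` one has `q₁ - i q₂ = 2/(z - w)` and `q₃ = -i(z + w)/(z - w)`,
so `H` is inverted by `HmapInv` on the quadric `q₁² + q₂² - q₃² = 1` away from `q₁ = i q₂`; there the
quadric gives `|q₃| = 1` and the sign condition of `η` forces `|q₁|² + |q₂|² - |q₃|² < 1`.

With `P = (1 - |z|²)(1 - |w|²)` one has `|1 - z̄w|² = P + |z - w|²`, hence
`|q₁|² + |q₂|² - |q₃|² = 1 + 2P/|z - w|² = 2/ρ(z,w)² - 1`, while `√((α + 1)/2) = 2/a² - 1`.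
So the level condition of `η` says `ρ = a`, and since `a < 1` it forces `P > 0`: `z, w` lie both
inside or both outside the disc. The sign condition decides: `|z - w|² Im(q₂(q̄₁ + q̄₃))` equals
`1 - |z|²|w|² + Im z (1 - |w|²) + Im w (1 - |z|²)`, which by `Im z ≥ -|z|` is at least
`(1 - |z|)(1 - |w|)(1 - |z||w|) > 0` inside the disc and at most this (now negative) number
outside. -/

open Complex hiding eta
open ComplexConjugate

section

variable {r s x y : ℝ}

lemma one_sub_sq_mul_sq_add_pos (hr : 0 ≤ r) (hs : 0 ≤ s) (hr1 : r < 1) (hs1 : s < 1)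
    (hx : -r ≤ x) (hy : -s ≤ y) :
    0 < 1 - r ^ 2 * s ^ 2 + x * (1 - s ^ 2) + y * (1 - r ^ 2) := by
  have hxs : -r * (1 - s ^ 2) ≤ x * (1 - s ^ 2) :=
    mul_le_mul_of_nonneg_right hx (by nlinarith)
  have hyr : -s * (1 - r ^ 2) ≤ y * (1 - r ^ 2) :=
    mul_le_mul_of_nonneg_right hy (by nlinarith)
  have hfac : 0 < (1 - r) * (1 - s) * (1 - r * s) :=
    mul_pos (mul_pos (by linarith) (by linarith)) (by nlinarith)
  nlinarith

lemma one_sub_sq_mul_sq_add_neg (hr1 : 1 < r) (hs1 : 1 < s) (hx : -r ≤ x) (hy : -s ≤ y) :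
    1 - r ^ 2 * s ^ 2 + x * (1 - s ^ 2) + y * (1 - r ^ 2) < 0 := by
  have hxs : x * (1 - s ^ 2) ≤ -r * (1 - s ^ 2) :=
    mul_le_mul_of_nonpos_right hx (by nlinarith)
  have hyr : y * (1 - r ^ 2) ≤ -s * (1 - r ^ 2) :=
    mul_le_mul_of_nonpos_right hy (by nlinarith)
  have hfac : (1 - r) * (1 - s) * (1 - r * s) < 0 :=
    mul_neg_of_pos_of_neg (mul_pos_of_neg_of_neg (by linarith) (by linarith)) (by nlinarith)
  nlinarith

end

lemma Hmap_quadric {z w : ℂ} (h : z ≠ w) :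
    (Hmap z w).1 ^ 2 + (Hmap z w).2.1 ^ 2 - (Hmap z w).2.2 ^ 2 = 1 := by
  have : z - w ≠ 0 := sub_ne_zero.mpr h
  simp only [Hmap]
  field_simp
  linear_combination (z ^ 2 * w ^ 2 - z ^ 2 - w ^ 2 + 1) * I_sq

lemma norm_one_sub_conj_mul_sq (z w : ℂ) :
    ‖1 - conj z * w‖ ^ 2 = (1 - ‖z‖ ^ 2) * (1 - ‖w‖ ^ 2) + ‖z - w‖ ^ 2 := by
  simp only [Complex.sq_norm, normSq_apply, mul_re, mul_im, sub_re, sub_im, one_re, one_im,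
    conj_re, conj_im]
  ring

lemma Hmap_hermitian_form {z w : ℂ} (h : z ≠ w) :
    ‖(Hmap z w).1‖ ^ 2 + ‖(Hmap z w).2.1‖ ^ 2 - ‖(Hmap z w).2.2‖ ^ 2
      = 1 + 2 * ((1 - ‖z‖ ^ 2) * (1 - ‖w‖ ^ 2)) / ‖z - w‖ ^ 2 := by
  have : ‖z - w‖ ≠ 0 := by simpa [sub_eq_zero] using h
  have hnum : ‖1 - z * w‖ ^ 2 + ‖1 + z * w‖ ^ 2 - ‖z + w‖ ^ 2
      = 2 * ((1 - ‖z‖ ^ 2) * (1 - ‖w‖ ^ 2)) + ‖z - w‖ ^ 2 := by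
    simp only [Complex.sq_norm, normSq_apply, mul_re, mul_im, sub_re, sub_im, add_re, add_im,
      one_re, one_im]
    ring
  simp only [Hmap, norm_div, norm_mul, norm_neg, norm_I, one_mul, div_pow]
  rw [← add_div, ← sub_div, hnum]
  field_simp
  ring

lemma rho_sq (z w : ℂ) :
    rho z w ^ 2 = ‖z - w‖ ^ 2 / ((1 - ‖z‖ ^ 2) * (1 - ‖w‖ ^ 2) + ‖z - w‖ ^ 2) := by
  rw [rho, norm_div, div_pow, norm_one_sub_conj_mul_sq]

lemma Hmap_hermitian_form_eq_two_div_rho_sq {z w : ℂ} (h : z ≠ w) :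
    ‖(Hmap z w).1‖ ^ 2 + ‖(Hmap z w).2.1‖ ^ 2 - ‖(Hmap z w).2.2‖ ^ 2 = 2 / rho z w ^ 2 - 1 := by
  have : ‖z - w‖ ≠ 0 := by simpa [sub_eq_zero] using h
  rw [Hmap_hermitian_form h, rho_sq, div_div_eq_mul_div]
  field_simp
  ring

lemma Hmap_im {z w : ℂ} (h : z ≠ w) :
    ((Hmap z w).2.1 * (conj (Hmap z w).1 + conj (Hmap z w).2.2)).im
      = (1 - ‖z‖ ^ 2 * ‖w‖ ^ 2 + z.im * (1 - ‖w‖ ^ 2) + w.im * (1 - ‖z‖ ^ 2)) / ‖z - w‖ ^ 2 := by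
  have hzw : z - w ≠ 0 := sub_ne_zero.mpr h
  have : (Hmap z w).2.1 * (conj (Hmap z w).1 + conj (Hmap z w).2.2)
      = I * (1 + z * w) * (conj (1 - z * w) + I * conj (z + w)) / ((‖z - w‖ ^ 2 : ℝ) : ℂ) := by
    rw [Complex.sq_norm, ← mul_conj]
    simp only [Hmap, map_div₀, map_mul, map_neg, conj_I]
    field_simp
  rw [this, div_ofReal_im]
  congr 1
  simp only [Complex.sq_norm, normSq_apply, mul_re, mul_im, sub_re, sub_im, add_re, add_im,
    one_re, one_im, conj_re, conj_im, I_re, I_im]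
  ring

lemma norm_lt_one_of_mul_pos {z w : ℂ} (hP : 0 < (1 - ‖z‖ ^ 2) * (1 - ‖w‖ ^ 2))
    (hN : 0 < 1 - ‖z‖ ^ 2 * ‖w‖ ^ 2 + z.im * (1 - ‖w‖ ^ 2) + w.im * (1 - ‖z‖ ^ 2)) :
    ‖z‖ < 1 ∧ ‖w‖ < 1 := by
  have hz := neg_le_of_abs_le (abs_im_le_norm z)
  have hw := neg_le_of_abs_le (abs_im_le_norm w)
  rcases pos_and_pos_or_neg_and_neg_of_mul_pos hP with ⟨hz1, hw1⟩ | ⟨hz1, hw1⟩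
  · constructor <;> nlinarith [norm_nonneg z, norm_nonneg w]
  · have hz1 : 1 < ‖z‖ := by nlinarith [norm_nonneg z]
    have hw1 : 1 < ‖w‖ := by nlinarith [norm_nonneg w]
    exact absurd hN (one_sub_sq_mul_sq_add_neg hz1 hw1 hz hw).not_gt

noncomputable def HmapInv (q : ℂ × ℂ × ℂ) : ℂ × ℂ :=
  ((I * q.2.2 + 1) / (q.1 - I * q.2.1), (I * q.2.2 - 1) / (q.1 - I * q.2.1))

lemma HmapInv_fst_ne_snd {q : ℂ × ℂ × ℂ} (hu : q.1 - I * q.2.1 ≠ 0) :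
    (HmapInv q).1 ≠ (HmapInv q).2 := by
  intro h
  simp only [HmapInv, div_left_inj' hu] at h
  exact two_ne_zero (by linear_combination h : (2 : ℂ) = 0)

lemma Hmap_HmapInv {q : ℂ × ℂ × ℂ} (hq : q.1 ^ 2 + q.2.1 ^ 2 - q.2.2 ^ 2 = 1)
    (hu : q.1 - I * q.2.1 ≠ 0) : Hmap (HmapInv q).1 (HmapInv q).2 = q := by
  obtain ⟨q₁, q₂, q₃⟩ := q
  dsimp only at hq hu
  simp only [HmapInv, Hmap, Prod.mk.injEq]
  refine ⟨?_, ?_, ?_⟩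
  · field_simp
    linear_combination -hq + (q₂ ^ 2 - q₃ ^ 2) * I_sq
  · field_simp
    linear_combination I * hq + (I * q₂ ^ 2 + I * q₃ ^ 2 - 2 * q₁ * q₂) * I_sq
  · field_simp
    linear_combination (-2 * q₃) * I_sq

lemma fst_sub_I_mul_snd_ne_zero {q : ℂ × ℂ × ℂ} (hq : q.1 ^ 2 + q.2.1 ^ 2 - q.2.2 ^ 2 = 1)
    (him : 0 < (q.2.1 * (conj q.1 + conj q.2.2)).im)
    (hform : 1 ≤ ‖q.1‖ ^ 2 + ‖q.2.1‖ ^ 2 - ‖q.2.2‖ ^ 2) : q.1 - I * q.2.1 ≠ 0 := by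
  obtain ⟨q₁, q₂, q₃⟩ := q
  intro hu
  obtain rfl : q₁ = I * q₂ := sub_eq_zero.mp hu
  have hq₃ : ‖q₃‖ = 1 := by
    have : q₃ ^ 2 = -1 := by linear_combination -hq + q₂ ^ 2 * I_sq
    rw [← pow_eq_one_iff_of_nonneg (norm_nonneg q₃) two_ne_zero, ← norm_pow, this, norm_neg,
      norm_one]
  simp only [norm_mul, norm_I, one_mul, hq₃] at hform
  have him_eq : (q₂ * (conj (I * q₂) + conj q₃)).im = -‖q₂‖ ^ 2 + (q₂ * conj q₃).im := by
    simp only [map_mul, conj_I, mul_add, add_im, Complex.sq_norm, normSq_apply, mul_im, mul_re,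
      neg_re, neg_im, I_re, I_im, conj_re, conj_im]
    ring
  have hbound : (q₂ * conj q₃).im ≤ ‖q₂‖ := by
    simpa [hq₃] using im_le_norm (q₂ * conj q₃)
  nlinarith [norm_nonneg q₂]

lemma sqrt_eta_param {a : ℝ} (ha : a ≠ 0) (ha2 : a ^ 2 ≤ 2) :
    √((8 / a ^ 4 - 8 / a ^ 2 + 1 + 1) / 2) = 2 / a ^ 2 - 1 := by
  have hsq : (8 / a ^ 4 - 8 / a ^ 2 + 1 + 1) / 2 = (2 / a ^ 2 - 1) ^ 2 := by
    field_simp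
    ring
  rw [hsq, Real.sqrt_sq (by rw [sub_nonneg, le_div_iff₀ (by positivity)]; linarith)]

lemma one_lt_two_div_sq_sub_one {a : ℝ} (ha : a ∈ Set.Ioo (0 : ℝ) 1) : 1 < 2 / a ^ 2 - 1 := by
  rw [lt_sub_iff_add_lt, lt_div_iff₀ (pow_pos ha.1 2)]
  nlinarith [ha.1, ha.2]

lemma Hmap_mem_eta {a α : ℝ} (ha : 0 < a) (hα : √((α + 1) / 2) = 2 / a ^ 2 - 1) {p : ℂ × ℂ}
    (hp : p ∈ Fset a) : Hmap p.1 p.2 ∈ eta α := by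
  obtain ⟨z, w⟩ := p
  obtain ⟨hz, hw, hρ⟩ := hp
  have hzw : z ≠ w := by
    rintro rfl
    rw [rho, sub_self, zero_div, norm_zero] at hρ
    exact ha.ne hρ
  refine ⟨Hmap_quadric hzw, ?_, ?_⟩
  · rw [Hmap_im hzw]
    exact div_pos (one_sub_sq_mul_sq_add_pos (norm_nonneg z) (norm_nonneg w) hz hw
      (neg_le_of_abs_le (abs_im_le_norm z)) (neg_le_of_abs_le (abs_im_le_norm w)))
      (pow_pos (norm_pos_iff.mpr (sub_ne_zero.mpr hzw)) 2)
  · rw [Hmap_hermitian_form_eq_two_div_rho_sq hzw, hρ, hα]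

lemma mem_Fset_of_Hmap_mem_eta {a α : ℝ} (ha : a ∈ Set.Ioo (0 : ℝ) 1)
    (hα : √((α + 1) / 2) = 2 / a ^ 2 - 1) {p : ℂ × ℂ} (hp : p.1 ≠ p.2)
    (h : Hmap p.1 p.2 ∈ eta α) : p ∈ Fset a := by
  obtain ⟨z, w⟩ := p
  replace hzw : z ≠ w := hp
  obtain ⟨-, him, hform⟩ := h
  rw [hα] at hform
  have hD : 0 < ‖z - w‖ ^ 2 := pow_pos (norm_pos_iff.mpr (sub_ne_zero.mpr hzw)) 2
  have hP : 0 < (1 - ‖z‖ ^ 2) * (1 - ‖w‖ ^ 2) := by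
    have h2P : 0 < 2 * ((1 - ‖z‖ ^ 2) * (1 - ‖w‖ ^ 2)) / ‖z - w‖ ^ 2 := by
      linarith [Hmap_hermitian_form hzw, one_lt_two_div_sq_sub_one ha]
    linarith [(div_pos_iff_of_pos_right hD).mp h2P]
  rw [Hmap_im hzw] at him
  obtain ⟨hz, hw⟩ := norm_lt_one_of_mul_pos hP ((div_pos_iff_of_pos_right hD).mp him)
  refine ⟨hz, hw, ?_⟩
  rw [Hmap_hermitian_form_eq_two_div_rho_sq hzw, sub_left_inj, div_eq_mul_inv, div_eq_mul_inv,
    mul_right_inj' two_ne_zero, inv_inj] at hform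
  exact (pow_left_inj₀ (norm_nonneg _) ha.1.le two_ne_zero).mp hform

/-- For every `a ∈ (0,1)`, `H` maps `F_a` onto `η^{(2)}_α` where
`α = 8/a⁴ − 8/a² + 1`. -/
theorem Hmap_image_Fset (a : ℝ) (ha : a ∈ Set.Ioo (0 : ℝ) 1) :
    (fun p : ℂ × ℂ => Hmap p.1 p.2) '' Fset a =
      eta (8 / a ^ 4 - 8 / a ^ 2 + 1) := by
  have hα := sqrt_eta_param ha.1.ne' (by nlinarith [ha.1, ha.2])
  ext q
  constructor
  · rintro ⟨p, hp, rfl⟩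
    exact Hmap_mem_eta ha.1 hα hp
  · intro hq
    obtain ⟨hquad, him, hform⟩ := id hq
    have hu : q.1 - I * q.2.1 ≠ 0 :=
      fst_sub_I_mul_snd_ne_zero hquad him (hform ▸ hα ▸ (one_lt_two_div_sq_sub_one ha).le)
    have hHq := Hmap_HmapInv hquad hu
    exact ⟨HmapInv q, mem_Fset_of_Hmap_mem_eta ha hα (HmapInv_fst_ne_snd hu) (by rwa [hHq]), hHq⟩
end
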